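/- arXiv:2403.03686 — 3 statements merged into one kernel-verified Lean document; each statement's English description precedes it below -/
import Mathlib

section
/- Let x ∈ {0,1}^I and y ∈ {0,1}^J be binary vectors satisfying the assignment constraints ∑_{i∈I} x_i = 1 and ∑_{j∈J} y_j = 1, and let v ∈ [0,1]^{I×J} satisfy the RLT1 constraints ∑_{j∈J} v_{ij} = x_i for all i ∈ I and ∑_{i∈I} v_{ij} = y_j for all j ∈ J. Then v_{ij} = x_i · y_j for all i ∈ I and j ∈ J. -/
lemma aux_unique {I : Type} [Fintype I] (x : I → ℝ)
    (hx : ∀ i, x i = 0 ∨ x i = 1) (hxs : ∑ i, x i = 1) :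
    ∃ i₀, x i₀ = 1 ∧ ∀ i, i ≠ i₀ → x i = 0 := by
  classical
  obtain ⟨i₀, hi₀⟩ : ∃ i, x i = 1 := by
    by_contra h
    push_neg at h
    have : ∀ i, x i = 0 := fun i => (hx i).resolve_right (h i)
    simp [this] at hxs
  refine ⟨i₀, hi₀, ?_⟩
  have h1 : x i₀ + ∑ i ∈ Finset.univ.erase i₀, x i = 1 := by
    rw [Finset.add_sum_erase _ x (Finset.mem_univ i₀)]; exact hxs
  have h2 : ∑ i ∈ Finset.univ.erase i₀, x i = 0 := by linarith [h1, hi₀]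
  intro i hi
  have := (Finset.sum_eq_zero_iff_of_nonneg (fun i _ => by rcases hx i with h | h <;> simp [h])).mp h2
  exact this i (Finset.mem_erase.mpr ⟨hi, Finset.mem_univ i⟩)

/-- RLT1 constraints force `v` to be the outer product of the binary
single-assignment vectors `x` and `y`. -/
theorem stmt_0 {I J : Type} [Fintype I] [Nonempty I] [Fintype J] [Nonempty J]
    (x : I → ℝ) (y : J → ℝ) (v : I → J → ℝ)
    (hx : ∀ i, x i = 0 ∨ x i = 1) (hy : ∀ j, y j = 0 ∨ y j = 1)
    (hxs : ∑ i, x i = 1) (hys : ∑ j, y j = 1)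
    (hv : ∀ i j, v i j ∈ Set.Icc (0:ℝ) 1)
    (hrow : ∀ i, ∑ j, v i j = x i)
    (hcol : ∀ j, ∑ i, v i j = y j) :
    ∀ i j, v i j = x i * y j := by
  classical
  obtain ⟨i₀, hi₀, hiz⟩ := aux_unique x hx hxs
  obtain ⟨j₀, hj₀, hjz⟩ := aux_unique y hy hys
  have hvnn : ∀ i j, 0 ≤ v i j := fun i j => (hv i j).1
  -- rows with x i = 0 vanish
  have hrow0 : ∀ i, i ≠ i₀ → ∀ j, v i j = 0 := by
    intro i hi j
    have h0 : ∑ j, v i j = 0 := by rw [hrow i, hiz i hi]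
    exact (Finset.sum_eq_zero_iff_of_nonneg (fun j _ => hvnn i j)).mp h0 j (Finset.mem_univ j)
  have hcol0 : ∀ j, j ≠ j₀ → ∀ i, v i j = 0 := by
    intro j hj i
    have h0 : ∑ i, v i j = 0 := by rw [hcol j, hjz j hj]
    exact (Finset.sum_eq_zero_iff_of_nonneg (fun i _ => hvnn i j)).mp h0 i (Finset.mem_univ i)
  have hmain : v i₀ j₀ = 1 := by
    have h1 : ∑ j, v i₀ j = 1 := by rw [hrow i₀, hi₀]
    have h2 : ∑ j, v i₀ j = v i₀ j₀ := by
      rw [← Finset.add_sum_erase _ (v i₀) (Finset.mem_univ j₀)]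
      have : ∑ j ∈ Finset.univ.erase j₀, v i₀ j = 0 :=
        Finset.sum_eq_zero fun j hj => hcol0 j (Finset.mem_erase.mp hj).1 i₀
      rw [this, add_zero]
    rw [← h2, h1]
  intro i j
  by_cases hi : i = i₀
  · by_cases hj : j = j₀
    · subst hi; subst hj; rw [hmain, hi₀, hj₀]; ring
    · subst hi; rw [hcol0 j hj i, hjz j hj]; ring
  · rw [hrow0 i hi j, hiz i hi]; ring
end

section
/- Let I, J be finite sets, let X ⊆ {0,1}^I and Y ⊆ {0,1}^J be sets of binary vectors such that every x ∈ X satisfies ∑_i x_i = 1 and every y ∈ Y satisfies ∑_j y_j = 1, and let G : I × J → ℝ. Then the minimum over (x,y) ∈ X × Y of the quadratic objective ∑_{i,j} G_{ij} x_i y_j equals the minimum over (x,y,v) with (x,y) ∈ X × Y and v ∈ [0,1]^{I×J} satisfying ∑_j v_{ij} = x_i and ∑_i v_{ij} = y_j of the linear objective ∑_{i,j} G_{ij} v_{ij}, assuming both feasible regions are nonempty. -/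
/-- The RLT1 linearization of a binary bilinear program with single-assignment
constraints attains the same optimal value as the quadratic program. -/
theorem stmt_1 {I J : Type} [Fintype I] [Fintype J]
    (X : Set (I → ℝ)) (Y : Set (J → ℝ)) (G : I → J → ℝ)
    (hX : ∀ x ∈ X, (∀ i, x i = 0 ∨ x i = 1) ∧ ∑ i, x i = 1)
    (hY : ∀ y ∈ Y, (∀ j, y j = 0 ∨ y j = 1) ∧ ∑ j, y j = 1)
    (hXne : X.Nonempty) (hYne : Y.Nonempty)
    (hmix : {r : ℝ | ∃ x ∈ X, ∃ y ∈ Y, ∃ v : I → J → ℝ,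
        (∀ i j, v i j ∈ Set.Icc (0:ℝ) 1) ∧
        (∀ i, ∑ j, v i j = x i) ∧ (∀ j, ∑ i, v i j = y j) ∧
        r = ∑ i, ∑ j, G i j * v i j}.Nonempty) :
    sInf {r : ℝ | ∃ x ∈ X, ∃ y ∈ Y, r = ∑ i, ∑ j, G i j * x i * y j}
      = sInf {r : ℝ | ∃ x ∈ X, ∃ y ∈ Y, ∃ v : I → J → ℝ,
        (∀ i j, v i j ∈ Set.Icc (0:ℝ) 1) ∧
        (∀ i, ∑ j, v i j = x i) ∧ (∀ j, ∑ i, v i j = y j) ∧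
        r = ∑ i, ∑ j, G i j * v i j} := by
  classical
  congr 1
  ext r
  simp only [Set.mem_setOf_eq]
  constructor
  · rintro ⟨x, hx, y, hy, rfl⟩
    refine ⟨x, hx, y, hy, fun i j => x i * y j, ?_, ?_, ?_, ?_⟩
    · intro i j
      rcases (hX x hx).1 i with h | h <;> rcases (hY y hy).1 j with h' | h' <;>
        simp [h, h', Set.mem_Icc]
    · intro i
      rw [← Finset.mul_sum, (hY y hy).2, mul_one]
    · intro j
      rw [← Finset.sum_mul, (hX x hx).2, one_mul]
    · exact Finset.sum_congr rfl fun i _ => Finset.sum_congr rfl fun j _ => (mul_assoc _ _ _)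
  · rintro ⟨x, hx, y, hy, v, hv01, hrow, hcol, rfl⟩
    refine ⟨x, hx, y, hy, ?_⟩
    have hxb := (hX x hx).1
    have hyb := (hY y hy).1
    have hvnn : ∀ i j, 0 ≤ v i j := fun i j => (hv01 i j).1
    have key : ∀ i j, v i j = x i * y j := by
      intro i j
      rcases hxb i with hx0 | hx1
      · -- row sum is 0, so v i j = 0
        have hs : ∑ k, v i k = 0 := by rw [hrow i, hx0]
        have := (Finset.sum_eq_zero_iff_of_nonneg (fun k _ => hvnn i k)).mp hs j
          (Finset.mem_univ j)
        rw [this, hx0, zero_mul]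
      · rcases hyb j with hy0 | hy1
        · -- column sum is 0
          have hs : ∑ k, v k j = 0 := by rw [hcol j, hy0]
          have := (Finset.sum_eq_zero_iff_of_nonneg (fun k _ => hvnn k j)).mp hs i
            (Finset.mem_univ i)
          rw [this, hy0, mul_zero]
        · -- x i = 1, y j = 1
          have hyzero : ∀ j', j' ≠ j → y j' = 0 := by
            intro j' hne
            have hsum : ∑ k, y k = 1 := (hY y hy).2
            have hsplit := Finset.add_sum_erase Finset.univ y (Finset.mem_univ j)
            have h1 : ∑ k ∈ Finset.univ.erase j, y k = 0 := by
              rw [← hsplit, hy1] at hsum; linarith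
            have hnn : ∀ k ∈ Finset.univ.erase j, 0 ≤ y k := fun k _ => by
              rcases hyb k with h | h <;> simp [h]
            exact (Finset.sum_eq_zero_iff_of_nonneg hnn).mp h1 j'
              (Finset.mem_erase.mpr ⟨hne, Finset.mem_univ j'⟩)
          have hvzero : ∀ j', j' ≠ j → v i j' = 0 := by
            intro j' hne
            have hs : ∑ k, v k j' = 0 := by rw [hcol j', hyzero j' hne]
            exact (Finset.sum_eq_zero_iff_of_nonneg (fun k _ => hvnn k j')).mp hs i
              (Finset.mem_univ i)
          have hsplit := Finset.add_sum_erase Finset.univ (v i) (Finset.mem_univ j)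
          have herase : ∑ k ∈ Finset.univ.erase j, v i k = 0 :=
            Finset.sum_eq_zero fun k hk => hvzero k (Finset.mem_erase.mp hk).1
          have hs : ∑ k, v i k = 1 := by rw [hrow i, hx1]
          have : v i j = 1 := by rw [← hsplit, herase] at hs; linarith
          rw [this, hx1, hy1, one_mul]
    exact Finset.sum_congr rfl fun i _ => Finset.sum_congr rfl fun j _ => by
      rw [key i j, mul_assoc]
end

section
/- With the setting of the cluster decomposition bound (finite first-stage set A, partition {Ω^c} of Ω, cluster weights w^c > 0), suppose the partition {Ω^{c'}}_{c'∈C'} refines {Ω^c}_{c∈C} (every cluster of C' is contained in some cluster of C). Then the refined cluster lower bound is no larger: ∑_{c'∈C'} w^{c'} z^{c'} ≤ ∑_{c∈C} w^c z^c. -/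
/-- A refined scenario cluster partition gives a cluster lower bound that is
no larger than the coarser one. -/
theorem stmt_3 {A Ω C C' : Type} [Fintype A] [Nonempty A] [Fintype Ω]
    [Fintype C] [Fintype C'] [DecidableEq C] [DecidableEq C']
    (f : A → ℝ) (w : Ω → ℝ) (Q : A → Ω → ℝ)
    (p : Ω → C) (p' : Ω → C')
    (hw : ∀ ω, 0 ≤ w ω)
    (href : ∀ ω ω', p' ω = p' ω' → p ω = p ω')
    (wc : C → ℝ) (wc' : C' → ℝ)
    (hwc : ∀ c, wc c = ∑ ω ∈ Finset.univ.filter (fun ω => p ω = c), w ω)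
    (hwc' : ∀ c', wc' c' = ∑ ω ∈ Finset.univ.filter (fun ω => p' ω = c'), w ω)
    (hpos : ∀ c, 0 < wc c) (hpos' : ∀ c', 0 < wc' c') :
    ∑ c', wc' c' *
        (⨅ a, (f a + ∑ ω ∈ Finset.univ.filter (fun ω => p' ω = c'),
          (w ω / wc' c') * Q a ω))
      ≤ ∑ c, wc c *
        (⨅ a, (f a + ∑ ω ∈ Finset.univ.filter (fun ω => p ω = c),
          (w ω / wc c) * Q a ω)) := by
  classical
  -- every refined cluster is nonempty
  have hne : ∀ c' : C', ∃ ω, p' ω = c' := by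
    intro c'
    by_contra h
    push_neg at h
    have hempty : Finset.univ.filter (fun ω => p' ω = c') = ∅ := by
      apply Finset.filter_eq_empty_iff.mpr
      intro ω _
      exact h ω
    have : wc' c' = 0 := by rw [hwc', hempty, Finset.sum_empty]
    exact absurd this (hpos' c').ne'
  choose g hg using hne
  set G : C' → C := fun c' => p (g c') with hGdef
  have hG : ∀ ω, G (p' ω) = p ω := by
    intro ω
    exact href (g (p' ω)) ω (hg (p' ω))
  -- key: sums over the fibers of a coarse cluster
  have key : ∀ (x : Ω → ℝ) (c : C),
      ∑ c' ∈ Finset.univ.filter (fun c' => G c' = c),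
        ∑ ω ∈ Finset.univ.filter (fun ω => p' ω = c'), x ω
      = ∑ ω ∈ Finset.univ.filter (fun ω => p ω = c), x ω := by
    intro x c
    simp only [Finset.sum_filter]
    have push : ∀ c' : C', (if G c' = c then
        ∑ ω : Ω, (if p' ω = c' then x ω else 0) else 0)
        = ∑ ω : Ω, (if G c' = c then (if p' ω = c' then x ω else 0) else 0) := by
      intro c'; split <;> simp
    simp only [push]
    rw [Finset.sum_comm]
    apply Finset.sum_congr rfl
    intro ω _
    have : ∀ c' : C', (if G c' = c then if p' ω = c' then x ω else 0 else 0)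
        = (if c' = p' ω then (if G c' = c then x ω else 0) else 0) := by
      intro c'
      by_cases h1 : c' = p' ω <;> by_cases h2 : G c' = c <;>
        simp [h1, h2, eq_comm]
    simp only [this]
    rw [Finset.sum_ite_eq' Finset.univ (p' ω)
      (fun c' => if G c' = c then x ω else 0)]
    simp [hG ω]
  have bdd : ∀ (h : A → ℝ), BddBelow (Set.range h) := fun h =>
    (Set.finite_range h).bddBelow
  rw [← Finset.sum_fiberwise Finset.univ G
    (fun c' => wc' c' * (⨅ a, (f a + ∑ ω ∈ Finset.univ.filter
      (fun ω => p' ω = c'), (w ω / wc' c') * Q a ω)))]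
  apply Finset.sum_le_sum
  intro c _
  rw [mul_comm, ← div_le_iff₀ (hpos c)]
  apply le_ciInf
  intro a
  rw [div_le_iff₀ (hpos c)]
  have hwcne : wc c ≠ 0 := (hpos c).ne'
  have expand : (f a + ∑ ω ∈ Finset.univ.filter (fun ω => p ω = c),
      (w ω / wc c) * Q a ω) * wc c
      = wc c * f a + ∑ ω ∈ Finset.univ.filter (fun ω => p ω = c),
        w ω * Q a ω := by
    rw [add_mul, Finset.sum_mul, mul_comm (f a)]
    congr 1
    apply Finset.sum_congr rfl
    intro ω _
    field_simp
  rw [expand]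
  calc ∑ c' ∈ Finset.univ.filter (fun c' => G c' = c),
        wc' c' * (⨅ a, (f a + ∑ ω ∈ Finset.univ.filter
          (fun ω => p' ω = c'), (w ω / wc' c') * Q a ω))
      ≤ ∑ c' ∈ Finset.univ.filter (fun c' => G c' = c),
        (wc' c' * f a + ∑ ω ∈ Finset.univ.filter (fun ω => p' ω = c'),
          w ω * Q a ω) := by
        apply Finset.sum_le_sum
        intro c' _
        have h1 : (⨅ a, (f a + ∑ ω ∈ Finset.univ.filter
            (fun ω => p' ω = c'), (w ω / wc' c') * Q a ω))
            ≤ f a + ∑ ω ∈ Finset.univ.filter (fun ω => p' ω = c'),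
              (w ω / wc' c') * Q a ω := ciInf_le (bdd _) a
        have h2 := mul_le_mul_of_nonneg_left h1 (hpos' c').le
        refine h2.trans_eq ?_
        rw [mul_add, Finset.mul_sum]
        congr 1
        apply Finset.sum_congr rfl
        intro ω _
        have : wc' c' ≠ 0 := (hpos' c').ne'
        field_simp
    _ = (∑ c' ∈ Finset.univ.filter (fun c' => G c' = c), wc' c') * f a
        + ∑ c' ∈ Finset.univ.filter (fun c' => G c' = c),
          ∑ ω ∈ Finset.univ.filter (fun ω => p' ω = c'), w ω * Q a ω := by
        rw [Finset.sum_add_distrib, Finset.sum_mul]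
    _ = wc c * f a + ∑ ω ∈ Finset.univ.filter (fun ω => p ω = c),
          w ω * Q a ω := by
        rw [key (fun ω => w ω * Q a ω) c]
        have hsum : ∑ c' ∈ Finset.univ.filter (fun c' => G c' = c), wc' c'
            = wc c := by
          rw [hwc c, ← key w c]
          exact Finset.sum_congr rfl fun c' _ => hwc' c'
        rw [hsum]
end
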